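/- With χ₁, χ₂ and χ_I as in the partition of unity construction: for all x = (x_1,…,x_N) in the support of χ_I, all j ∈ P_J, and all k ∈ Q₀ ∪ … ∪ Q_{J−1}, one has |x_j − x_k| ≥ (1/4)·4^{−N}|x_1|; in particular |x_j − x_k|^{−1} ≤ 4^{N+1}|x_1|^{−1}. -/
import Mathlib


/-- The localization function `χ_I` from the partition of unity: the product over `j ∈ P_J`
of `χ₁(4^J|x_j|/|x_1|)`, over `j ∈ Q_s` (`1 ≤ s ≤ J−1`) of `χ₂(4^s|x_j|/|x_1|)·χ₁(4^{s−1}|x_j|/|x_1|)`,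
and over `j ∈ Q₀` of `χ₂(|x_j|/|x_1|)` (here `x_1` is the coordinate `x 0`). -/
noncomputable def chiI (N J : ℕ) [NeZero N] (P : Finset (Fin N)) (Q : Fin J → Finset (Fin N))
    (chi1 chi2 : ℝ → ℝ)
    (x : PiLp 2 (fun _ : Fin N => EuclideanSpace ℝ (Fin 3))) : ℝ :=
  (∏ j ∈ P, chi1 (4 ^ J * ‖x j‖ / ‖x 0‖)) *
    ∏ s : Fin J, ∏ j ∈ Q s,
      (chi2 (4 ^ (s : ℕ) * ‖x j‖ / ‖x 0‖) *
        (if (s : ℕ) = 0 then 1 else chi1 (4 ^ ((s : ℕ) - 1) * ‖x j‖ / ‖x 0‖)))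

/-- On the support of `χ_I`, for `j ∈ P_J` and `k ∈ Q₀ ∪ … ∪ Q_{J−1}`:
`|x_j − x_k| ≥ (1/4)·4^{−N}|x_1|`, and in particular `|x_j − x_k|⁻¹ ≤ 4^{N+1}|x_1|⁻¹`. -/
theorem stmt11 (N J : ℕ) [NeZero N] (hN : 2 ≤ N) (hJ : J ≤ N)
    (P : Finset (Fin N)) (Q : Fin J → Finset (Fin N))
    (hP0 : (0 : Fin N) ∉ P) (hQ0 : ∀ s, (0 : Fin N) ∉ Q s)
    (hPQ : ∀ s, Disjoint P (Q s)) (hQQ : ∀ s t, s ≠ t → Disjoint (Q s) (Q t))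
    (hcover : P ∪ Finset.univ.biUnion Q = Finset.univ \ {0})
    (chi1 chi2 : ℝ → ℝ) (hsmooth : ContDiff ℝ (⊤ : ℕ∞) chi1)
    (hrange : ∀ t, 0 ≤ chi1 t ∧ chi1 t ≤ 1)
    (hlow : ∀ t : ℝ, t ≤ 1 / 4 → chi1 t = 1)
    (hhigh : ∀ t : ℝ, 3 / 4 ≤ t → chi1 t = 0)
    (hchi2 : ∀ t, chi2 t = 1 - chi1 t)
    (x : PiLp 2 (fun _ : Fin N => EuclideanSpace ℝ (Fin 3)))
    (hx1 : x 0 ≠ 0) (hsupp : chiI N J P Q chi1 chi2 x ≠ 0) :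
    ∀ j ∈ P, ∀ s : Fin J, ∀ k ∈ Q s,
      ‖x 0‖ / 4 ^ (N + 1) ≤ ‖x j - x k‖ ∧
        ‖x j - x k‖⁻¹ ≤ 4 ^ (N + 1) / ‖x 0‖ := by
  intro j hj s k hk
  have ha : (0:ℝ) < ‖x 0‖ := norm_pos_iff.mpr hx1
  unfold chiI at hsupp
  have h1 := (mul_ne_zero_iff.mp hsupp).1
  have h2 := (mul_ne_zero_iff.mp hsupp).2
  have hjne : chi1 (4 ^ J * ‖x j‖ / ‖x 0‖) ≠ 0 :=
    Finset.prod_ne_zero_iff.mp h1 j hj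
  have hkne : chi2 (4 ^ (s:ℕ) * ‖x k‖ / ‖x 0‖) ≠ 0 := by
    have := Finset.prod_ne_zero_iff.mp h2 s (Finset.mem_univ s)
    have := Finset.prod_ne_zero_iff.mp this k hk
    exact (mul_ne_zero_iff.mp this).1
  -- from hjne: 4^J * ‖x j‖ / ‖x 0‖ < 3/4
  have hjb : 4 ^ J * ‖x j‖ / ‖x 0‖ < 3 / 4 := by
    by_contra h
    exact hjne (hhigh _ (le_of_not_gt h))
  have hkb : 1 / 4 < 4 ^ (s:ℕ) * ‖x k‖ / ‖x 0‖ := by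
    by_contra h
    apply hkne
    rw [hchi2, hlow _ (le_of_not_gt h)]; ring
  have hxj : ‖x j‖ < 3 / 4 * ‖x 0‖ / 4 ^ J := by
    rw [div_lt_iff₀ ha] at hjb
    rw [lt_div_iff₀ (by positivity : (0:ℝ) < (4:ℝ) ^ J)]
    nlinarith
  have hsJ : (s:ℕ) + 1 ≤ J := s.2
  have hpow : (4:ℝ) ^ ((s:ℕ)+1) ≤ 4 ^ J :=
    pow_le_pow_right₀ (by norm_num) hsJ
  have hxk : ‖x 0‖ / 4 ^ J < ‖x k‖ := by
    rw [lt_div_iff₀ ha] at hkb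
    rw [div_lt_iff₀ (by positivity : (0:ℝ) < (4:ℝ) ^ J)]
    have hnk : (0:ℝ) ≤ ‖x k‖ := norm_nonneg _
    have h4 : (4:ℝ) ^ ((s:ℕ)+1) = 4 ^ (s:ℕ) * 4 := pow_succ 4 _
    nlinarith [mul_le_mul_of_nonneg_left hpow hnk]
  have hdist : ‖x 0‖ / 4 ^ (N+1) ≤ ‖x j - x k‖ := by
    have htri : ‖x k‖ - ‖x j‖ ≤ ‖x j - x k‖ := by
      have := norm_sub_norm_le (x k) (x j)
      rw [norm_sub_rev] at this; linarith
    have hNp : (4:ℝ) ^ J ≤ 4 ^ N := pow_le_pow_right₀ (by norm_num) hJ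
    have hpp : (0:ℝ) < (4:ℝ) ^ J := by positivity
    have hpN : (0:ℝ) < (4:ℝ) ^ N := by positivity
    have key : ‖x 0‖ / 4 ^ (N+1) ≤ ‖x 0‖ / 4 ^ J - 3 / 4 * ‖x 0‖ / 4 ^ J := by
      have : ‖x 0‖ / 4 ^ J - 3 / 4 * ‖x 0‖ / 4 ^ J = ‖x 0‖ / (4 * 4 ^ J) := by
        field_simp; ring
      rw [this, pow_succ]
      apply div_le_div_of_nonneg_left (le_of_lt ha) (by positivity)
      nlinarith
    linarith
  refine ⟨hdist, ?_⟩
  have hpos : (0:ℝ) < ‖x 0‖ / 4 ^ (N+1) := by positivity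
  have hd0 : (0:ℝ) < ‖x j - x k‖ := lt_of_lt_of_le hpos hdist
  rw [show (4:ℝ) ^ (N+1) / ‖x 0‖ = (‖x 0‖ / 4 ^ (N+1))⁻¹ by
    rw [inv_div]]
  exact inv_anti₀ hpos hdist
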